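/- arXiv:2503.10932 — 5 statements merged into one kernel-verified Lean document; each statement's English description precedes it below -/
import Mathlib

section
/- Let N₁, N₂ be nonnegative integers and let δ₂ : {0,...,N₁} × {0,...,N₂} → [0,1] be symmetric (δ₂(n₁,n₂) + δ₂(N₁-n₁, N₂-n₂) = 1). Define regret R(μ₁,μ₂) = max{μ₁,μ₂} - μ₁·(1 - E(μ₁,μ₂)) - μ₂·E(μ₁,μ₂), where E is the expected probability of choosing treatment 2 (binomial expectation of δ₂). Then R(1-μ₁, 1-μ₂) = R(μ₁, μ₂) for all μ₁, μ₂ ∈ [0,1]. -/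
/-!
The Bernstein weights satisfy `b_{N,n}(1 - μ) = b_{N,N-n}(μ)`, so reindexing by `n ↦ N - n`
and using the symmetry `δ₂(N₁-n₁, N₂-n₂) = 1 - δ₂(n₁, n₂)` together with `∑ b_{N,n} = 1` gives
`E(1-μ₁, 1-μ₂) = 1 - E(μ₁, μ₂)`. Substituting this into the regret, invariance reduces to
`max (1-μ₁) (1-μ₂) = 1 - min μ₁ μ₂` and `min μ₁ μ₂ + max μ₁ μ₂ = μ₁ + μ₂`.
-/

/-- Expected probability of assigning treatment 2 under rule `δ₂`. -/
noncomputable def expDelta (N₁ N₂ : ℕ) (δ₂ : ℕ → ℕ → ℝ) (μ₁ μ₂ : ℝ) : ℝ :=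
  ∑ n₁ ∈ Finset.range (N₁ + 1), ∑ n₂ ∈ Finset.range (N₂ + 1),
    δ₂ n₁ n₂ * (N₁.choose n₁ : ℝ) * μ₁ ^ n₁ * (1 - μ₁) ^ (N₁ - n₁) *
      (N₂.choose n₂ : ℝ) * μ₂ ^ n₂ * (1 - μ₂) ^ (N₂ - n₂)

/-- Regret of the rule `δ₂` at the mean vector `(μ₁, μ₂)`. -/
noncomputable def regret2 (N₁ N₂ : ℕ) (δ₂ : ℕ → ℕ → ℝ) (μ₁ μ₂ : ℝ) : ℝ :=
  max μ₁ μ₂ - μ₁ * (1 - expDelta N₁ N₂ δ₂ μ₁ μ₂) - μ₂ * expDelta N₁ N₂ δ₂ μ₁ μ₂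

open Finset Polynomial

lemma bernsteinPolynomial_eval_one_sub {R : Type*} [CommRing R] {n ν : ℕ} (h : ν ≤ n) (x : R) :
    (bernsteinPolynomial R n ν).eval (1 - x) = (bernsteinPolynomial R n (n - ν)).eval x := by
  rw [← bernsteinPolynomial.flip R n ν h, eval_comp]
  simp

lemma sum_range_succ_reflect {M : Type*} [AddCommMonoid M] (f : ℕ → M) (N : ℕ) :
    ∑ n ∈ range (N + 1), f (N - n) = ∑ n ∈ range (N + 1), f n := by
  simpa using sum_range_reflect f (N + 1)

lemma expDelta_eq_sum_bernstein (N₁ N₂ : ℕ) (δ₂ : ℕ → ℕ → ℝ) (μ₁ μ₂ : ℝ) :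
    expDelta N₁ N₂ δ₂ μ₁ μ₂ = ∑ n₁ ∈ range (N₁ + 1), ∑ n₂ ∈ range (N₂ + 1),
      δ₂ n₁ n₂ * (bernsteinPolynomial ℝ N₁ n₁).eval μ₁ *
        (bernsteinPolynomial ℝ N₂ n₂).eval μ₂ := by
  simp only [expDelta, bernsteinPolynomial, eval_mul, eval_pow, eval_sub, eval_one, eval_X,
    eval_natCast]
  refine sum_congr rfl fun _ _ => sum_congr rfl fun _ _ => by ring

lemma expDelta_one_sub (N₁ N₂ : ℕ) (δ₂ : ℕ → ℕ → ℝ)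
    (hsym : ∀ n₁ ≤ N₁, ∀ n₂ ≤ N₂, δ₂ n₁ n₂ + δ₂ (N₁ - n₁) (N₂ - n₂) = 1) (μ₁ μ₂ : ℝ) :
    expDelta N₁ N₂ δ₂ (1 - μ₁) (1 - μ₂) = 1 - expDelta N₁ N₂ δ₂ μ₁ μ₂ := by
  set B₁ := fun n => (bernsteinPolynomial ℝ N₁ n).eval μ₁
  set B₂ := fun n => (bernsteinPolynomial ℝ N₂ n).eval μ₂
  have hB : (∑ n₁ ∈ range (N₁ + 1), B₁ n₁) * ∑ n₂ ∈ range (N₂ + 1), B₂ n₂ = 1 := by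
    simp only [B₁, B₂, ← eval_finsetSum, bernsteinPolynomial.sum, eval_one, mul_one]
  rw [expDelta_eq_sum_bernstein, expDelta_eq_sum_bernstein]
  calc ∑ n₁ ∈ range (N₁ + 1), ∑ n₂ ∈ range (N₂ + 1),
          δ₂ n₁ n₂ * (bernsteinPolynomial ℝ N₁ n₁).eval (1 - μ₁) *
            (bernsteinPolynomial ℝ N₂ n₂).eval (1 - μ₂)
      = ∑ n₁ ∈ range (N₁ + 1), ∑ n₂ ∈ range (N₂ + 1),
          δ₂ (N₁ - n₁) (N₂ - n₂) * B₁ n₁ * B₂ n₂ := by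
        rw [← sum_range_succ_reflect]
        refine sum_congr rfl fun n₁ h₁ => ?_
        rw [← sum_range_succ_reflect]
        refine sum_congr rfl fun n₂ h₂ => ?_
        rw [mem_range_succ_iff] at h₁ h₂
        simp only [bernsteinPolynomial_eval_one_sub (Nat.sub_le _ _), Nat.sub_sub_self h₁,
          Nat.sub_sub_self h₂, B₁, B₂]
    _ = ∑ n₁ ∈ range (N₁ + 1), ∑ n₂ ∈ range (N₂ + 1),
          (B₁ n₁ * B₂ n₂ - δ₂ n₁ n₂ * B₁ n₁ * B₂ n₂) := by
        refine sum_congr rfl fun n₁ h₁ => sum_congr rfl fun n₂ h₂ => ?_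
        rw [mem_range_succ_iff] at h₁ h₂
        linear_combination B₁ n₁ * B₂ n₂ * hsym n₁ h₁ n₂ h₂
    _ = 1 - ∑ n₁ ∈ range (N₁ + 1), ∑ n₂ ∈ range (N₂ + 1), δ₂ n₁ n₂ * B₁ n₁ * B₂ n₂ := by
        simp only [sum_sub_distrib, ← sum_mul_sum, hB]

theorem stmt3_general (N₁ N₂ : ℕ) (δ₂ : ℕ → ℕ → ℝ)
    (hsym : ∀ n₁ ≤ N₁, ∀ n₂ ≤ N₂, δ₂ n₁ n₂ + δ₂ (N₁ - n₁) (N₂ - n₂) = 1)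
    (μ₁ μ₂ : ℝ) :
    regret2 N₁ N₂ δ₂ (1 - μ₁) (1 - μ₂) = regret2 N₁ N₂ δ₂ μ₁ μ₂ := by
  have hmax : max (1 - μ₁) (1 - μ₂) = 1 - min μ₁ μ₂ := max_sub_sub_left 1 μ₁ μ₂
  have hminmax := min_add_max μ₁ μ₂
  simp only [regret2, expDelta_one_sub N₁ N₂ δ₂ hsym, hmax]
  linear_combination -hminmax

/-- for a symmetric rule, regret is invariant under
`(μ₁,μ₂) ↦ (1-μ₁, 1-μ₂)`. -/
theorem stmt3 (N₁ N₂ : ℕ) (δ₂ : ℕ → ℕ → ℝ)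
    (hrange : ∀ n₁ ≤ N₁, ∀ n₂ ≤ N₂, δ₂ n₁ n₂ ∈ Set.Icc (0:ℝ) 1)
    (hsym : ∀ n₁ ≤ N₁, ∀ n₂ ≤ N₂, δ₂ n₁ n₂ + δ₂ (N₁ - n₁) (N₂ - n₂) = 1)
    (μ₁ μ₂ : ℝ) (h₁ : μ₁ ∈ Set.Icc (0:ℝ) 1) (h₂ : μ₂ ∈ Set.Icc (0:ℝ) 1) :
    regret2 N₁ N₂ δ₂ (1 - μ₁) (1 - μ₂) = regret2 N₁ N₂ δ₂ μ₁ μ₂ :=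
  stmt3_general N₁ N₂ δ₂ hsym μ₁ μ₂
end

section
/- Under the hypotheses of the discretization lemma (M compact, R(δ,·) continuous in μ uniformly in δ, M_m an ε_m-discretization with ε_m → 0, V and V_m the minimax values over M and M_m respectively), if δ_m is any sequence of rules satisfying V_m - max_{μ∈M_m} R(δ_m, μ) → 0, then sup_{μ∈M} R(δ_m, μ) → V. -/
/-!
Write `S δ = sup_M R(δ,·)` and `S_m δ = max_{M_m} R(δ,·)`. Uniform equicontinuity of `R` together
with `ε_m → 0` makes `S_m → S` uniformly on the set of rules, so the infima converge, `V_m → V`,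
and the gap `S (δ_m) - S_m (δ_m)` tends to zero. Then
`S (δ_m) = (S (δ_m) - S_m (δ_m)) - (V_m - S_m (δ_m)) + V_m → 0 - 0 + V`.
-/

open Filter Topology Set

lemma dist_sSup_image_finset_sup'_le {X : Type*} {f : X → ℝ} {M : Set X} {N : Finset X}
    (hN : N.Nonempty) (hNM : ↑N ⊆ M) {c : ℝ} (h : ∀ x ∈ M, ∃ y ∈ N, dist (f x) (f y) ≤ c) :
    dist (sSup (f '' M)) (N.sup' hN f) ≤ c := by
  have hM : M.Nonempty := hN.to_set.mono hNM
  have hup : ∀ x ∈ M, f x ≤ N.sup' hN f + c := fun x hx => by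
    obtain ⟨y, hy, hxy⟩ := h x hx
    have := (abs_sub_le_iff.1 (Real.dist_eq _ _ ▸ hxy)).1
    linarith [N.le_sup' f hy]
  have hsSup_le : sSup (f '' M) ≤ N.sup' hN f + c := csSup_le (hM.image f) (forall_mem_image.2 hup)
  have hsup'_le : N.sup' hN f ≤ sSup (f '' M) := N.sup'_le hN f fun y hy =>
    le_csSup ⟨_, forall_mem_image.2 hup⟩ (mem_image_of_mem f (hNM hy))
  have hc : 0 ≤ c := by
    obtain ⟨x, hx⟩ := hM
    obtain ⟨y, -, hxy⟩ := h x hx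
    exact dist_nonneg.trans hxy
  rw [Real.dist_eq, abs_sub_le_iff]
  constructor <;> linarith

lemma ciInf_le_ciInf_add {ι : Type*} [Nonempty ι] {f g : ι → ℝ} {c : ℝ}
    (hf : BddBelow (range f)) (h : ∀ i, f i ≤ g i + c) : ⨅ i, f i ≤ (⨅ i, g i) + c := by
  have : (⨅ i, f i) - c ≤ ⨅ i, g i := le_ciInf fun i => by linarith [ciInf_le hf i, h i]
  linarith

lemma BddBelow.range_of_le_add {ι : Type*} {f g : ι → ℝ} {c : ℝ}
    (hf : BddBelow (range f)) (h : ∀ i, f i ≤ g i + c) : BddBelow (range g) := by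
  obtain ⟨b, hb⟩ := hf
  exact ⟨b - c, by rintro _ ⟨i, rfl⟩; linarith [hb ⟨i, rfl⟩, h i]⟩

/-- Also valid when the families are unbounded below, where both infima take the junk value `0`. -/
lemma dist_ciInf_ciInf_le {ι : Type*} [Nonempty ι] {f g : ι → ℝ} {c : ℝ}
    (h : ∀ i, dist (f i) (g i) ≤ c) : dist (⨅ i, f i) (⨅ i, g i) ≤ c := by
  have hfg : ∀ i, f i ≤ g i + c := fun i => by
    linarith [(abs_sub_le_iff.1 (Real.dist_eq _ _ ▸ h i)).1]
  have hgf : ∀ i, g i ≤ f i + c := fun i => by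
    linarith [(abs_sub_le_iff.1 (Real.dist_eq _ _ ▸ h i)).2]
  by_cases hf : BddBelow (range f)
  · have hg := hf.range_of_le_add hfg
    rw [Real.dist_eq, abs_sub_le_iff]
    constructor <;> linarith [ciInf_le_ciInf_add hf hfg, ciInf_le_ciInf_add hg hgf]
  · have hg : ¬BddBelow (range g) := fun hg => hf (hg.range_of_le_add hgf)
    rw [Real.iInf_of_not_bddBelow hf, Real.iInf_of_not_bddBelow hg, dist_self]
    exact dist_nonneg.trans (h (Classical.arbitrary ι))

lemma TendstoUniformly.tendsto_ciInf {ι α : Type*} [Nonempty α] {F : ι → α → ℝ} {f : α → ℝ}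
    {p : Filter ι} (h : TendstoUniformly F f p) :
    Tendsto (fun n => ⨅ a, F n a) p (𝓝 (⨅ a, f a)) := by
  refine Metric.tendsto_nhds.2 fun e he => ?_
  filter_upwards [Metric.tendstoUniformly_iff.1 h (e / 2) (half_pos he)] with n hn
  calc dist (⨅ a, F n a) (⨅ a, f a) ≤ e / 2 := dist_ciInf_ciInf_le fun a => by
          rw [dist_comm]; exact (hn a).le
    _ < e := half_lt_self he

lemma TendstoUniformly.tendsto_sub_apply {ι α β : Type*} [SeminormedAddCommGroup β]
    {F : ι → α → β} {f : α → β} {p : Filter ι} (h : TendstoUniformly F f p) (x : ι → α) :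
    Tendsto (fun n => f (x n) - F n (x n)) p (𝓝 0) := by
  refine Metric.tendsto_nhds.2 fun e he => ?_
  filter_upwards [Metric.tendstoUniformly_iff.1 h e he] with n hn
  rw [dist_zero_right, ← dist_eq_norm]
  exact hn (x n)

lemma tendstoUniformly_finset_sup'_sSup_image {X D ι : Type*} [PseudoMetricSpace X]
    {M : Set X} {R : D → X → ℝ}
    (hR : ∀ lam > (0 : ℝ), ∃ η > (0 : ℝ), ∀ x ∈ M, ∀ y ∈ M,
      dist x y < η → ∀ δ, dist (R δ x) (R δ y) < lam)
    {N : ι → Finset X} (hNM : ∀ n, ↑(N n) ⊆ M) (hN : ∀ n, (N n).Nonempty)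
    {ε : ι → ℝ} (hdisc : ∀ n, ∀ x ∈ M, ∃ y ∈ N n, dist x y < ε n)
    {p : Filter ι} (hε : Tendsto ε p (𝓝 0)) :
    TendstoUniformly (fun n δ => (N n).sup' (hN n) (R δ)) (fun δ => sSup (R δ '' M)) p := by
  refine Metric.tendstoUniformly_iff.2 fun lam hlam => ?_
  obtain ⟨η, hη, hRη⟩ := hR (lam / 2) (half_pos hlam)
  filter_upwards [hε.eventually (gt_mem_nhds hη)] with n hn δ
  calc dist (sSup (R δ '' M)) ((N n).sup' (hN n) (R δ)) ≤ lam / 2 :=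
        dist_sSup_image_finset_sup'_le (hN n) (hNM n) fun x hx => by
          obtain ⟨y, hy, hxy⟩ := hdisc n x hx
          exact ⟨y, hy, (hRη x hx y (hNM n hy) (hxy.trans hn) δ).le⟩
    _ < lam := half_lt_self hlam

theorem stmt7_general {T : ℕ} {D : Type*}
    (M : Set (EuclideanSpace ℝ (Fin T)))
    (R : D → EuclideanSpace ℝ (Fin T) → ℝ)
    (hcont : ∀ lam > (0:ℝ), ∃ η > (0:ℝ), ∀ μ ∈ M, ∀ μ' ∈ M,
      ‖μ - μ'‖ < η → ∀ δ : D, |R δ μ - R δ μ'| < lam)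
    (Mm : ℕ → Finset (EuclideanSpace ℝ (Fin T)))
    (hsub : ∀ m, ↑(Mm m) ⊆ M) (hMmne : ∀ m, (Mm m).Nonempty)
    (ε : ℕ → ℝ)
    (hdisc : ∀ m, ∀ μ ∈ M, ∃ ν ∈ Mm m, ‖μ - ν‖ < ε m)
    (hε : Filter.Tendsto ε Filter.atTop (nhds 0))
    (δm : ℕ → D)
    (happrox : Filter.Tendsto
      (fun m => (⨅ δ : D, (Mm m).sup' (hMmne m) (R δ)) - (Mm m).sup' (hMmne m) (R (δm m)))
      Filter.atTop (nhds 0)) :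
    Filter.Tendsto (fun m => sSup (R (δm m) '' M)) Filter.atTop
      (nhds (⨅ δ : D, sSup (R δ '' M))) := by
  have : Nonempty D := ⟨δm 0⟩
  have hunif := tendstoUniformly_finset_sup'_sSup_image
    (by simpa only [dist_eq_norm, Real.norm_eq_abs] using hcont) hsub hMmne
    (by simpa only [dist_eq_norm] using hdisc) hε
  have hgap := hunif.tendsto_sub_apply δm
  simpa using (hgap.sub happrox).add hunif.tendsto_ciInf

/-- under the hypotheses of the discretization lemma, any sequence of rules `δ_m`
that is approximately minimax for the discretized games (`V_m - max_{μ∈M_m} R(δ_m,μ) → 0`)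
satisfies `sup_{μ∈M} R(δ_m, μ) → V`. -/
theorem stmt7 {T : ℕ} {D : Type*} [Nonempty D]
    (M : Set (EuclideanSpace ℝ (Fin T))) (hMcompact : IsCompact M) (hMne : M.Nonempty)
    (R : D → EuclideanSpace ℝ (Fin T) → ℝ)
    (hcont : ∀ lam > (0:ℝ), ∃ η > (0:ℝ), ∀ μ ∈ M, ∀ μ' ∈ M,
      ‖μ - μ'‖ < η → ∀ δ : D, |R δ μ - R δ μ'| < lam)
    (Mm : ℕ → Finset (EuclideanSpace ℝ (Fin T)))
    (hsub : ∀ m, ↑(Mm m) ⊆ M) (hMmne : ∀ m, (Mm m).Nonempty)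
    (ε : ℕ → ℝ)
    (hdisc : ∀ m, ∀ μ ∈ M, ∃ ν ∈ Mm m, ‖μ - ν‖ < ε m)
    (hε : Filter.Tendsto ε Filter.atTop (nhds 0))
    (δm : ℕ → D)
    (happrox : Filter.Tendsto
      (fun m => (⨅ δ : D, (Mm m).sup' (hMmne m) (R δ)) - (Mm m).sup' (hMmne m) (R (δm m)))
      Filter.atTop (nhds 0)) :
    Filter.Tendsto (fun m => sSup (R (δm m) '' M)) Filter.atTop
      (nhds (⨅ δ : D, sSup (R δ '' M))) :=
  stmt7_general M R hcont Mm hsub hMmne ε hdisc hε δm happrox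
end

section
/- In the setting N₁ = 0, N₂ > 0 with binary outcomes, the pair consisting of the treatment rule δ₂(0,n₂) = n₂/N₂ and nature's mixed strategy that puts probability 1/2 on each of the mean vectors (0, 1/2) and (1, 1/2) forms a Nash equilibrium of the zero-sum game in which nature's payoff is regret; in particular the rule δ₂(0,n₂) = n₂/N₂ is minimax regret, with value 1/4. -/
/-- The proportional rule `δ₂(0, n₂) = n₂/N₂`. -/
noncomputable def propRule (N₂ : ℕ) : ℕ → ℕ → ℝ := fun _ n₂ => (n₂ : ℝ) / N₂

theorem sum_range_mul_choose_mul_pow_mul_pow (N : ℕ) (x : ℝ) :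
    ∑ n ∈ Finset.range (N + 1), (n : ℝ) * N.choose n * x ^ n * (1 - x) ^ (N - n) = N * x := by
  have h := congrArg (Polynomial.eval x) (bernsteinPolynomial.sum_smul ℝ N)
  simp only [Polynomial.eval_finsetSum, bernsteinPolynomial,
    Polynomial.eval_mul, Polynomial.eval_pow, Polynomial.eval_sub, Polynomial.eval_one,
    Polynomial.eval_X, Polynomial.eval_natCast, nsmul_eq_mul] at h
  rw [← h]
  exact Finset.sum_congr rfl fun n _ => by ring

theorem expDelta_zero_left (N₂ : ℕ) (δ : ℕ → ℕ → ℝ) (μ₁ μ₂ : ℝ) :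
    expDelta 0 N₂ δ μ₁ μ₂ =
      ∑ n ∈ Finset.range (N₂ + 1), δ 0 n * N₂.choose n * μ₂ ^ n * (1 - μ₂) ^ (N₂ - n) := by
  rw [expDelta, Finset.sum_range_one]
  exact Finset.sum_congr rfl fun n _ => by simp

theorem expDelta_zero_left_one (N₂ : ℕ) (δ : ℕ → ℕ → ℝ) (μ₂ : ℝ) :
    expDelta 0 N₂ δ 1 μ₂ = expDelta 0 N₂ δ 0 μ₂ := by
  rw [expDelta_zero_left, expDelta_zero_left]

theorem expDelta_propRule {N₂ : ℕ} (hN : 0 < N₂) (μ₁ μ₂ : ℝ) :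
    expDelta 0 N₂ (propRule N₂) μ₁ μ₂ = μ₂ := by
  have hN' : (N₂ : ℝ) ≠ 0 := Nat.cast_ne_zero.mpr hN.ne'
  rw [expDelta_zero_left]
  calc ∑ n ∈ Finset.range (N₂ + 1),
        propRule N₂ 0 n * N₂.choose n * μ₂ ^ n * (1 - μ₂) ^ (N₂ - n)
      = (∑ n ∈ Finset.range (N₂ + 1), (n : ℝ) * N₂.choose n * μ₂ ^ n * (1 - μ₂) ^ (N₂ - n))
          / N₂ := by
        rw [Finset.sum_div]
        exact Finset.sum_congr rfl fun n _ => by rw [propRule]; ring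
    _ = μ₂ := by rw [sum_range_mul_choose_mul_pow_mul_pow]; field_simp

theorem regret2_propRule_le {N₂ : ℕ} (hN : 0 < N₂) {μ₁ μ₂ : ℝ}
    (h₁ : 0 ≤ μ₁) (h₁' : μ₁ ≤ 1) (h₂ : 0 ≤ μ₂) :
    regret2 0 N₂ (propRule N₂) μ₁ μ₂ ≤ 1 / 4 := by
  rw [regret2, expDelta_propRule hN]
  rcases le_total μ₁ μ₂ with h | h
  · rw [max_eq_right h]
    nlinarith [sq_nonneg (2 * μ₂ - μ₁ - 1), sq_nonneg (1 - μ₁)]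
  · rw [max_eq_left h]
    nlinarith [sq_nonneg (1 - 2 * μ₂), mul_nonneg (sub_nonneg.2 h₁') h₂]

theorem regret2_zero_left {N₁ N₂ : ℕ} (δ : ℕ → ℕ → ℝ) {μ₂ : ℝ} (hμ₂ : 0 ≤ μ₂) :
    regret2 N₁ N₂ δ 0 μ₂ = μ₂ * (1 - expDelta N₁ N₂ δ 0 μ₂) := by
  rw [regret2, max_eq_right hμ₂]
  ring

theorem regret2_one_left {N₁ N₂ : ℕ} (δ : ℕ → ℕ → ℝ) {μ₂ : ℝ} (hμ₂ : μ₂ ≤ 1) :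
    regret2 N₁ N₂ δ 1 μ₂ = (1 - μ₂) * expDelta N₁ N₂ δ 1 μ₂ := by
  rw [regret2, max_eq_left hμ₂]
  ring

theorem regret2_zero_half_add_regret2_one_half (N₂ : ℕ) (δ : ℕ → ℕ → ℝ) :
    regret2 0 N₂ δ 0 (1 / 2) + regret2 0 N₂ δ 1 (1 / 2) = 1 / 2 := by
  rw [regret2_zero_left δ (by norm_num), regret2_one_left δ (by norm_num),
    expDelta_zero_left_one]
  ring

theorem regret2_propRule_half {N₂ : ℕ} (hN : 0 < N₂) {μ₁ : ℝ} (hμ₁ : μ₁ = 0 ∨ μ₁ = 1) :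
    regret2 0 N₂ (propRule N₂) μ₁ (1 / 2) = 1 / 4 := by
  rcases hμ₁ with rfl | rfl <;>
    · rw [regret2, expDelta_propRule hN]
      norm_num

/-- with `N₁ = 0 < N₂`, the rule `δ₂(0,n₂) = n₂/N₂` together with nature's mixed
strategy putting mass `1/2` on each of `(0,1/2)` and `(1,1/2)` forms a Nash equilibrium of the
zero-sum game with payoff regret: both support points maximize regret against the rule
(with common value `1/4`), the rule is a best response (minimizes mixed expected regret)
against nature's mixture, and the rule is minimax regret with value `1/4`. -/
theorem stmt9 (N₂ : ℕ) (hN : 0 < N₂) :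
    (∀ μ₁ ∈ Set.Icc (0:ℝ) 1, ∀ μ₂ ∈ Set.Icc (0:ℝ) 1,
        regret2 0 N₂ (propRule N₂) μ₁ μ₂ ≤ 1 / 4) ∧
    regret2 0 N₂ (propRule N₂) 0 (1/2) = 1 / 4 ∧
    regret2 0 N₂ (propRule N₂) 1 (1/2) = 1 / 4 ∧
    (∀ δ' : ℕ → ℕ → ℝ, (∀ n₁ ≤ 0, ∀ n₂ ≤ N₂, δ' n₁ n₂ ∈ Set.Icc (0:ℝ) 1) →
      (1/2) * regret2 0 N₂ (propRule N₂) 0 (1/2) + (1/2) * regret2 0 N₂ (propRule N₂) 1 (1/2) ≤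
      (1/2) * regret2 0 N₂ δ' 0 (1/2) + (1/2) * regret2 0 N₂ δ' 1 (1/2)) ∧
    (∀ δ' : ℕ → ℕ → ℝ, (∀ n₁ ≤ 0, ∀ n₂ ≤ N₂, δ' n₁ n₂ ∈ Set.Icc (0:ℝ) 1) →
      ∃ μ₁ ∈ Set.Icc (0:ℝ) 1, ∃ μ₂ ∈ Set.Icc (0:ℝ) 1,
        (1:ℝ) / 4 ≤ regret2 0 N₂ δ' μ₁ μ₂) := by
  refine ⟨fun μ₁ hμ₁ μ₂ hμ₂ => regret2_propRule_le hN hμ₁.1 hμ₁.2 hμ₂.1,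
    regret2_propRule_half hN (.inl rfl), regret2_propRule_half hN (.inr rfl), ?_, ?_⟩
  · intro δ' _
    have hprop := regret2_zero_half_add_regret2_one_half N₂ (propRule N₂)
    have hδ' := regret2_zero_half_add_regret2_one_half N₂ δ'
    linarith
  · intro δ' _
    have hδ' := regret2_zero_half_add_regret2_one_half N₂ δ'
    rcases le_total (1 / 4) (regret2 0 N₂ δ' 0 (1 / 2)) with h | h
    · exact ⟨0, by norm_num, 1 / 2, by norm_num, h⟩
    · exact ⟨1, by norm_num, 1 / 2, by norm_num, by linarith⟩
end

section
/- Suppose nature plays a mixed strategy over mean vectors μ̄_m = (μ_{1m}, μ_{2m}) ∈ [0,1]² with probabilities p_m > 0, m = 1,...,2m̄, with ∑p_m = 1, satisfying the pairing condition (μ_{1m}, μ_{2m}) = (1 - μ_{1,m+m̄}, 1 - μ_{2,m+m̄}) and p_m = p_{m+m̄} for m = 1,...,m̄. Then for any two samples w_N = (n₁,n₂) and w_N' = (n₁',n₂') with n_t + n_t' = N_t for t = 1,2 and P(w_N) > 0, the posterior mean difference satisfies E(Y₁ | w_N) - E(Y₂ | w_N) = E(Y₂ | w_N') - E(Y₁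 | w_N'). -/
/-- Likelihood of observing `(n₁,n₂)` successes when nature picks the mean vector
`(μ1 m, μ2 m)`. -/
noncomputable def likeli (N₁ N₂ : ℕ) (μ1 μ2 : ℕ → ℝ) (m n₁ n₂ : ℕ) : ℝ :=
  (N₁.choose n₁ : ℝ) * (μ1 m) ^ n₁ * (1 - μ1 m) ^ (N₁ - n₁) *
    ((N₂.choose n₂ : ℝ) * (μ2 m) ^ n₂ * (1 - μ2 m) ^ (N₂ - n₂))

/-- Marginal probability of the sample `(n₁,n₂)` under nature's mixed strategy with `M`
support points. -/
noncomputable def margP (N₁ N₂ M : ℕ) (μ1 μ2 p : ℕ → ℝ) (n₁ n₂ : ℕ) : ℝ :=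
  ∑ m ∈ Finset.range M, p m * likeli N₁ N₂ μ1 μ2 m n₁ n₂

/-- Posterior mean (via Bayes' rule) of the coordinate `μt` given the sample `(n₁,n₂)`. -/
noncomputable def postMean (N₁ N₂ M : ℕ) (μt μ1 μ2 p : ℕ → ℝ) (n₁ n₂ : ℕ) : ℝ :=
  (∑ m ∈ Finset.range M, μt m * p m * likeli N₁ N₂ μ1 μ2 m n₁ n₂) /
    margP N₁ N₂ M μ1 μ2 p n₁ n₂

/-!
Nature's pairing `m ↦ m + m'` is a measure-preserving involution of the support that replaces
every mean `μ` by `1 - μ`. Under `μ ↦ 1 - μ` the binomial likelihood of a sample `(n₁, n₂)`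
becomes that of the complementary sample `(N₁ - n₁, N₂ - n₂)`, so reindexing the Bayes sums
along the pairing shows that both samples have the same marginal probability and that
`∑ (μ₁ - μ₂) p L` changes sign.
-/

open Finset

theorem sum_range_two_mul_eq_of_pairing {M : Type*} [AddCommMonoid M] {k : ℕ} {f g : ℕ → M}
    (hf : ∀ m < k, f m = g (m + k)) (hg : ∀ m < k, f (m + k) = g m) :
    ∑ m ∈ range (2 * k), f m = ∑ m ∈ range (2 * k), g m := by
  rw [two_mul, sum_range_add, sum_range_add, add_comm (∑ m ∈ range k, g m)]
  congr 1 <;> refine sum_congr rfl fun m hm => ?_ <;> rw [add_comm k]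
  · exact hf m (mem_range.1 hm)
  · exact hg m (mem_range.1 hm)

section Likelihood

variable {N₁ N₂ n₁ n₂ k m : ℕ} {μ1 μ2 : ℕ → ℝ}

theorem likeli_eq_compl_of_one_sub (hμ1 : μ1 k = 1 - μ1 m) (hμ2 : μ2 k = 1 - μ2 m)
    (h₁ : n₁ ≤ N₁) (h₂ : n₂ ≤ N₂) :
    likeli N₁ N₂ μ1 μ2 k n₁ n₂ = likeli N₁ N₂ μ1 μ2 m (N₁ - n₁) (N₂ - n₂) := by
  simp only [likeli, hμ1, hμ2, sub_sub_cancel, Nat.choose_symm h₁, Nat.choose_symm h₂,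
    Nat.sub_sub_self h₁, Nat.sub_sub_self h₂]
  ring

theorem likeli_compl_eq_of_one_sub (hμ1 : μ1 k = 1 - μ1 m) (hμ2 : μ2 k = 1 - μ2 m)
    (h₁ : n₁ ≤ N₁) (h₂ : n₂ ≤ N₂) :
    likeli N₁ N₂ μ1 μ2 k (N₁ - n₁) (N₂ - n₂) = likeli N₁ N₂ μ1 μ2 m n₁ n₂ := by
  simpa only [Nat.sub_sub_self h₁, Nat.sub_sub_self h₂] using
    likeli_eq_compl_of_one_sub hμ1 hμ2 (Nat.sub_le N₁ n₁) (Nat.sub_le N₂ n₂)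

end Likelihood

section Pairing

variable {N₁ N₂ m' n₁ n₂ : ℕ} {μ1 μ2 p : ℕ → ℝ}

theorem sum_mul_likeli_compl_of_pairing (φ : ℝ → ℝ → ℝ)
    (hpair1 : ∀ m < m', μ1 (m + m') = 1 - μ1 m) (hpair2 : ∀ m < m', μ2 (m + m') = 1 - μ2 m)
    (hpairp : ∀ m < m', p (m + m') = p m) (h₁ : n₁ ≤ N₁) (h₂ : n₂ ≤ N₂) :
    ∑ m ∈ range (2 * m'), φ (μ1 m) (μ2 m) * p m * likeli N₁ N₂ μ1 μ2 m (N₁ - n₁) (N₂ - n₂) =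
      ∑ m ∈ range (2 * m'), φ (1 - μ1 m) (1 - μ2 m) * p m * likeli N₁ N₂ μ1 μ2 m n₁ n₂ := by
  refine sum_range_two_mul_eq_of_pairing (fun m hm => ?_) (fun m hm => ?_)
  · rw [hpair1 m hm, hpair2 m hm, hpairp m hm, sub_sub_cancel, sub_sub_cancel,
      likeli_eq_compl_of_one_sub (hpair1 m hm) (hpair2 m hm) h₁ h₂]
  · rw [hpair1 m hm, hpair2 m hm, hpairp m hm,
      likeli_compl_eq_of_one_sub (hpair1 m hm) (hpair2 m hm) h₁ h₂]

theorem margP_compl_of_pairing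
    (hpair1 : ∀ m < m', μ1 (m + m') = 1 - μ1 m) (hpair2 : ∀ m < m', μ2 (m + m') = 1 - μ2 m)
    (hpairp : ∀ m < m', p (m + m') = p m) (h₁ : n₁ ≤ N₁) (h₂ : n₂ ≤ N₂) :
    margP N₁ N₂ (2 * m') μ1 μ2 p (N₁ - n₁) (N₂ - n₂) = margP N₁ N₂ (2 * m') μ1 μ2 p n₁ n₂ := by
  simpa only [margP, one_mul] using
    sum_mul_likeli_compl_of_pairing (fun _ _ => 1) hpair1 hpair2 hpairp h₁ h₂

theorem sum_sub_mul_likeli_compl_of_pairing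
    (hpair1 : ∀ m < m', μ1 (m + m') = 1 - μ1 m) (hpair2 : ∀ m < m', μ2 (m + m') = 1 - μ2 m)
    (hpairp : ∀ m < m', p (m + m') = p m) (h₁ : n₁ ≤ N₁) (h₂ : n₂ ≤ N₂) :
    ∑ m ∈ range (2 * m'), (μ2 m * p m * likeli N₁ N₂ μ1 μ2 m (N₁ - n₁) (N₂ - n₂) -
        μ1 m * p m * likeli N₁ N₂ μ1 μ2 m (N₁ - n₁) (N₂ - n₂)) =
      ∑ m ∈ range (2 * m'), (μ1 m * p m * likeli N₁ N₂ μ1 μ2 m n₁ n₂ -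
        μ2 m * p m * likeli N₁ N₂ μ1 μ2 m n₁ n₂) := by
  simpa only [sub_sub_sub_cancel_left, sub_mul] using
    sum_mul_likeli_compl_of_pairing (fun x y => y - x) hpair1 hpair2 hpairp h₁ h₂

end Pairing

theorem stmt11_general (N₁ N₂ m' : ℕ) (μ1 μ2 p : ℕ → ℝ)
    (hpair1 : ∀ m < m', μ1 (m + m') = 1 - μ1 m)
    (hpair2 : ∀ m < m', μ2 (m + m') = 1 - μ2 m)
    (hpairp : ∀ m < m', p (m + m') = p m)
    (n₁ n₂ : ℕ) (h₁ : n₁ ≤ N₁) (h₂ : n₂ ≤ N₂) :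
    postMean N₁ N₂ (2 * m') μ1 μ1 μ2 p n₁ n₂ - postMean N₁ N₂ (2 * m') μ2 μ1 μ2 p n₁ n₂ =
      postMean N₁ N₂ (2 * m') μ2 μ1 μ2 p (N₁ - n₁) (N₂ - n₂) -
        postMean N₁ N₂ (2 * m') μ1 μ1 μ2 p (N₁ - n₁) (N₂ - n₂) := by
  rw [postMean, postMean, postMean, postMean, div_sub_div_same, div_sub_div_same,
    margP_compl_of_pairing hpair1 hpair2 hpairp h₁ h₂, ← sum_sub_distrib, ← sum_sub_distrib,
    sum_sub_mul_likeli_compl_of_pairing hpair1 hpair2 hpairp h₁ h₂]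

/-- if nature's mixed strategy satisfies the pairing condition, then the
posterior mean difference flips sign between a sample and its complement:
`E(Y₁|w) - E(Y₂|w) = E(Y₂|w') - E(Y₁|w')` where `w = (n₁,n₂)`, `w' = (N₁-n₁, N₂-n₂)`. -/
theorem stmt11 (N₁ N₂ m' : ℕ) (μ1 μ2 p : ℕ → ℝ)
    (hμ1 : ∀ m < 2 * m', μ1 m ∈ Set.Icc (0:ℝ) 1)
    (hμ2 : ∀ m < 2 * m', μ2 m ∈ Set.Icc (0:ℝ) 1)
    (hp : ∀ m < 2 * m', 0 < p m)
    (hpsum : ∑ m ∈ Finset.range (2 * m'), p m = 1)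
    (hpair1 : ∀ m < m', μ1 (m + m') = 1 - μ1 m)
    (hpair2 : ∀ m < m', μ2 (m + m') = 1 - μ2 m)
    (hpairp : ∀ m < m', p (m + m') = p m)
    (n₁ n₂ : ℕ) (h₁ : n₁ ≤ N₁) (h₂ : n₂ ≤ N₂)
    (hpos : 0 < margP N₁ N₂ (2 * m') μ1 μ2 p n₁ n₂) :
    postMean N₁ N₂ (2 * m') μ1 μ1 μ2 p n₁ n₂ - postMean N₁ N₂ (2 * m') μ2 μ1 μ2 p n₁ n₂ =
      postMean N₁ N₂ (2 * m') μ2 μ1 μ2 p (N₁ - n₁) (N₂ - n₂) -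
        postMean N₁ N₂ (2 * m') μ1 μ1 μ2 p (N₁ - n₁) (N₂ - n₂) :=
  stmt11_general N₁ N₂ m' μ1 μ2 p hpair1 hpair2 hpairp n₁ n₂ h₁ h₂
end

section
/- Suppose δ is a minimax regret rule for the problem with outcomes in {0,1}^T and mean vectors constrained to M ⊆ [0,1]^T, under fixed-assignment sampling. Define the coarsened rule δ^C for outcomes in [0,1]^T by δ^C(w_N) = δ(w̃_N), where w̃_N replaces each observed outcome y ∈ [0,1] by an independent Bernoulli(y) draw. Then δ^C is a minimax regret rule for the problem where outcomes lie in [0,1]^T with the same mean restriction M; moreover the minimax regret values of the two problems coincide. -/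
/-!
Replacing each observation `y ∈ [0,1]` by a Bernoulli(`y`) draw turns a sample from any state
with mean vector `μ` into a sample of Bernoulli(`μ_t`) outcomes, so the coarsened rule has the
same regret at every state as `δb` has at the state's mean vector: the worst-case regrets agree.
Conversely, restricting any `[0,1]`-rule to `{0,1}`-valued samples gives a binary rule whose regret
at `μ` is the regret of the original rule at the Bernoulli state with means `μ`, an admissible
state; so every `[0,1]`-rule has worst-case regret at least the binary minimax value.
-/

open MeasureTheory

/-- The coarsened rule: given a binary-sample rule `δb`, the coarsened rule applied to a
sample `w` with outcomes in `[0,1]` assigns treatment `t` with the expected probability of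
`δb` applied to independent Bernoulli(`w i`) coarsenings of the observations. -/
noncomputable def coarsen {ι : Type*} [Fintype ι] [DecidableEq ι] {T : ℕ}
    (δb : (ι → Bool) → Fin T → ℝ) (w : ι → ℝ) (t : Fin T) : ℝ :=
  ∑ b : ι → Bool, (∏ i, if b i then w i else 1 - w i) * δb b t

/-- Expected probability that the binary-sample rule `δb` assigns treatment `t`, when
observation `i` is Bernoulli with mean `μ (τ i)` (`τ` is the fixed treatment assignment). -/
noncomputable def binExp {ι : Type*} [Fintype ι] [DecidableEq ι] {T : ℕ}
    (τ : ι → Fin T) (δb : (ι → Bool) → Fin T → ℝ) (μ : Fin T → ℝ) (t : Fin T) : ℝ :=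
  ∑ b : ι → Bool, (∏ i, if b i then μ (τ i) else 1 - μ (τ i)) * δb b t

/-- Regret of a binary-sample rule at the mean vector `μ` (binary-outcome problem). -/
noncomputable def binRegret {ι : Type*} [Fintype ι] [DecidableEq ι] {T : ℕ}
    (τ : ι → Fin T) (δb : (ι → Bool) → Fin T → ℝ) (μ : Fin T → ℝ) : ℝ :=
  (⨆ t, μ t) - ∑ t, μ t * binExp τ δb μ t

/-- Mean vector of a state (a tuple of outcome distributions). -/
noncomputable def stateMean {T : ℕ} (s : Fin T → Measure ℝ) (t : Fin T) : ℝ :=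
  ∫ x, x ∂ s t

/-- Regret of a rule for `[0,1]`-valued outcomes at state `s`, under fixed assignment `τ`. -/
noncomputable def contRegret {ι : Type*} [Fintype ι] {T : ℕ}
    (τ : ι → Fin T) (δ : (ι → ℝ) → Fin T → ℝ) (s : Fin T → Measure ℝ) : ℝ :=
  (⨆ t, stateMean s t) - ∑ t, stateMean s t * ∫ w, δ w t ∂ (Measure.pi fun i => s (τ i))

/-- A valid (possibly randomized, measurable) rule for the `[0,1]`-outcome problem. -/
def IsRuleC {ι : Type*} {T : ℕ} (δ : (ι → ℝ) → Fin T → ℝ) : Prop :=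
  (∀ t, Measurable fun w => δ w t) ∧ (∀ w t, 0 ≤ δ w t) ∧ ∀ w, ∑ t, δ w t = 1

/-- A valid rule for the binary-outcome problem. -/
def IsRuleB {ι : Type*} {T : ℕ} (δb : (ι → Bool) → Fin T → ℝ) : Prop :=
  (∀ b t, 0 ≤ δb b t) ∧ ∀ b, ∑ t, δb b t = 1

/-- An admissible state: each marginal is a probability distribution on `[0,1]`, with mean
vector in `M`. -/
def IsState {T : ℕ} (M : Set (Fin T → ℝ)) (s : Fin T → Measure ℝ) : Prop :=
  (∀ t, IsProbabilityMeasure (s t)) ∧ (∀ t, s t (Set.Icc (0:ℝ) 1) = 1) ∧ stateMean s ∈ M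


open ProbabilityTheory unitInterval

lemma integrable_id_of_measure_Icc_eq_one {ν : Measure ℝ} [IsProbabilityMeasure ν]
    (h : ν (Set.Icc 0 1) = 1) : Integrable (fun x : ℝ => x) ν := by
  have hsupp : ∀ᵐ x ∂ν, x ∈ Set.Icc (0 : ℝ) 1 := by
    rw [ae_mem_iff_measure_eq measurableSet_Icc.nullMeasurableSet, h, measure_univ]
  refine Integrable.mono' (integrable_const 1) measurable_id'.aestronglyMeasurable ?_
  filter_upwards [hsupp] with x hx
  rw [Real.norm_eq_abs, abs_le]
  exact ⟨by linarith [hx.1], hx.2⟩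

section Coarsening

variable {ι : Type*} [Fintype ι] {m : ι → Measure ℝ} [∀ i, IsProbabilityMeasure (m i)]

lemma integrable_prod_bernoulliWeight (hm : ∀ i, Integrable (fun x : ℝ => x) (m i))
    (b : ι → Bool) :
    Integrable (fun w : ι → ℝ => ∏ i, if b i then w i else 1 - w i) (Measure.pi m) := by
  refine Integrable.fintype_prod (f := fun i x => if b i then x else 1 - x) fun i => ?_
  cases b i
  · exact (integrable_const 1).sub (hm i)
  · exact hm i

lemma integral_prod_bernoulliWeight (hm : ∀ i, Integrable (fun x : ℝ => x) (m i))
    (b : ι → Bool) :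
    ∫ w, (∏ i, if b i then w i else 1 - w i) ∂(Measure.pi m) =
      ∏ i, if b i then ∫ x, x ∂(m i) else 1 - ∫ x, x ∂(m i) := by
  rw [integral_fintype_prod_eq_prod (fun i x => if b i then x else 1 - x)]
  refine Finset.prod_congr rfl fun i _ => ?_
  cases b i
  · simp [integral_sub (integrable_const 1) (hm i)]
  · rfl

variable [DecidableEq ι] {T : ℕ}

lemma integral_coarsen (hm : ∀ i, Integrable (fun x : ℝ => x) (m i))
    (δb : (ι → Bool) → Fin T → ℝ) (t : Fin T) :
    ∫ w, coarsen δb w t ∂(Measure.pi m) =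
      ∑ b : ι → Bool, (∏ i, if b i then ∫ x, x ∂(m i) else 1 - ∫ x, x ∂(m i)) * δb b t := by
  unfold coarsen
  rw [integral_finsetSum _ fun b _ => (integrable_prod_bernoulliWeight hm b).mul_const _]
  simp_rw [integral_mul_const, integral_prod_bernoulliWeight hm]

lemma contRegret_coarsen (τ : ι → Fin T) (δb : (ι → Bool) → Fin T → ℝ)
    {s : Fin T → Measure ℝ} [∀ t, IsProbabilityMeasure (s t)]
    (hs : ∀ t, Integrable (fun x : ℝ => x) (s t)) :
    contRegret τ (coarsen δb) s = binRegret τ δb (stateMean s) := by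
  simp only [contRegret, binRegret, binExp, integral_coarsen (fun i => hs (τ i)), stateMean]

end Coarsening

section Bernoulli

variable {T : ℕ}

/-- Clamping `μ t` into `[0,1]` makes this total; on `[0,1]`-valued `μ` it is the Bernoulli
state with mean vector `μ` (`stateMean_bernoulliState`). -/
noncomputable def bernoulliState (μ : Fin T → ℝ) : Fin T → Measure ℝ :=
  fun t => Ber(1, 0, Set.projIcc 0 1 zero_le_one (μ t))

instance (μ : Fin T → ℝ) (t : Fin T) : IsProbabilityMeasure (bernoulliState μ t) := by
  unfold bernoulliState; infer_instance

variable {μ : Fin T → ℝ}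

lemma stateMean_bernoulliState (hμ : ∀ t, μ t ∈ Set.Icc 0 1) :
    stateMean (bernoulliState μ) = μ := by
  funext t
  simp [stateMean, bernoulliState, integral_bernoulliMeasure, Set.projIcc_of_mem _ (hμ t)]

lemma isState_bernoulliState {M : Set (Fin T → ℝ)} (hμM : μ ∈ M)
    (hμ : ∀ t, μ t ∈ Set.Icc 0 1) : IsState M (bernoulliState μ) :=
  ⟨inferInstance,
    fun _ => bernoulliMeasure_apply_of_mem_of_mem _ measurableSet_Icc (by simp) (by simp),
    by rwa [stateMean_bernoulliState hμ]⟩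

variable {ι : Type*}

def restrictToBinary (δ : (ι → ℝ) → Fin T → ℝ) : (ι → Bool) → Fin T → ℝ :=
  fun b => δ fun i => if b i then 1 else 0

lemma IsRuleC.restrictToBinary {δ : (ι → ℝ) → Fin T → ℝ} (hδ : IsRuleC δ) :
    IsRuleB (restrictToBinary δ) :=
  ⟨fun _ => hδ.2.1 _, fun _ => hδ.2.2 _⟩

variable [Fintype ι] [DecidableEq ι]

lemma integral_pi_bernoulliMeasure (p : ι → I) (g : (ι → ℝ) → ℝ) :
    ∫ w, g w ∂(Measure.pi fun i => Ber((1 : ℝ), 0, p i)) =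
      ∑ b : ι → Bool, (∏ i, if b i then (p i : ℝ) else 1 - p i) *
        g (fun i => if b i then 1 else 0) := by
  set e : (ι → Bool) → ι → ℝ := fun b i => if b i then 1 else 0
  -- `e` is a measurable embedding, so no measurability of `g` is needed to pull back the integral
  have he : MeasurableEmbedding e :=
    { injective := fun b c hbc => funext fun i => by
        have := congrFun hbc i
        cases hb : b i <;> cases hc : c i <;> simp_all [e]
      measurable := measurable_of_finite e
      measurableSet_image' := fun s _ => (s.toFinite.image e).measurableSet }
  have hpi : (Measure.pi fun i => Ber(true, false, p i)).map e =
      Measure.pi (fun i => Ber((1 : ℝ), 0, p i)) := by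
    refine (Measure.pi_map_pi (f := fun _ (b : Bool) => if b then (1 : ℝ) else 0)
      fun i => (measurable_of_finite _).aemeasurable).trans ?_
    simp
  rw [← hpi, he.integral_map, integral_fintype Integrable.of_finite]
  refine Finset.sum_congr rfl fun b _ => ?_
  rw [measureReal_def, Measure.pi_singleton, ENNReal.toReal_prod, smul_eq_mul]
  congr 1
  refine Finset.prod_congr rfl fun i _ => ?_
  cases b i <;> simp

lemma contRegret_bernoulliState (τ : ι → Fin T) (δ : (ι → ℝ) → Fin T → ℝ)
    (hμ : ∀ t, μ t ∈ Set.Icc 0 1) :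
    contRegret τ δ (bernoulliState μ) = binRegret τ (restrictToBinary δ) μ := by
  simp only [contRegret, binRegret, binExp, stateMean_bernoulliState hμ, bernoulliState,
    integral_pi_bernoulliMeasure, Set.projIcc_of_mem _ (hμ _), restrictToBinary]

end Bernoulli

section MinimaxValue

variable {ι : Type*} [Fintype ι] {T : ℕ} (τ : ι → Fin T)

lemma contRegret_le_one {δ : (ι → ℝ) → Fin T → ℝ} (hδ : ∀ w t, 0 ≤ δ w t)
    {s : Fin T → Measure ℝ} (hs : ∀ t, stateMean s t ∈ Set.Icc 0 1) :
    contRegret τ δ s ≤ 1 := by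
  have hbest : (⨆ t, stateMean s t) ≤ 1 := Real.iSup_le (fun t => (hs t).2) zero_le_one
  have hwelfare : 0 ≤ ∑ t, stateMean s t * ∫ w, δ w t ∂(Measure.pi fun i => s (τ i)) :=
    Finset.sum_nonneg fun t _ => mul_nonneg (hs t).1 (integral_nonneg fun w => hδ w t)
  unfold contRegret
  linarith

variable {M : Set (Fin T → ℝ)} (hM : ∀ μ ∈ M, ∀ t, μ t ∈ Set.Icc (0 : ℝ) 1)
include hM

lemma bddAbove_image_contRegret {δ : (ι → ℝ) → Fin T → ℝ} (hδ : ∀ w t, 0 ≤ δ w t) :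
    BddAbove ((fun s => contRegret τ δ s) '' {s | IsState M s}) :=
  ⟨1, by rintro _ ⟨s, hs, rfl⟩; exact contRegret_le_one τ hδ (hM _ hs.2.2)⟩

variable [DecidableEq ι]

lemma image_contRegret_coarsen (δb : (ι → Bool) → Fin T → ℝ) :
    (fun s => contRegret τ (coarsen δb) s) '' {s | IsState M s} =
      (fun μ => binRegret τ δb μ) '' M := by
  ext x
  constructor
  · rintro ⟨s, ⟨_, hIcc, hmean⟩, rfl⟩
    exact ⟨stateMean s, hmean,
      (contRegret_coarsen τ δb fun t => integrable_id_of_measure_Icc_eq_one (hIcc t)).symm⟩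
  · rintro ⟨μ, hμM, rfl⟩
    refine ⟨bernoulliState μ, isState_bernoulliState hμM (hM μ hμM), ?_⟩
    dsimp only
    rw [contRegret_coarsen τ δb (s := bernoulliState μ) fun t =>
        integrable_bernoulliMeasure _ _ _ _,
      stateMean_bernoulliState (hM μ hμM)]

lemma image_binRegret_restrictToBinary_subset (δ : (ι → ℝ) → Fin T → ℝ) :
    (fun μ => binRegret τ (restrictToBinary δ) μ) '' M ⊆
      (fun s => contRegret τ δ s) '' {s | IsState M s} := by
  rintro _ ⟨μ, hμM, rfl⟩
  exact ⟨bernoulliState μ, isState_bernoulliState hμM (hM μ hμM),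
    contRegret_bernoulliState τ δ (hM μ hμM)⟩

end MinimaxValue

theorem stmt16_general {ι : Type*} [Fintype ι] [DecidableEq ι] {T : ℕ}
    (τ : ι → Fin T) (M : Set (Fin T → ℝ)) (hMne : M.Nonempty)
    (hM : ∀ μ ∈ M, ∀ t, μ t ∈ Set.Icc (0:ℝ) 1)
    (δb : (ι → Bool) → Fin T → ℝ)
    (hminimax : ∀ δb' : (ι → Bool) → Fin T → ℝ, IsRuleB δb' →
      sSup ((fun μ => binRegret τ δb μ) '' M) ≤ sSup ((fun μ => binRegret τ δb' μ) '' M)) :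
    (∀ δ' : (ι → ℝ) → Fin T → ℝ, IsRuleC δ' →
      sSup ((fun s => contRegret τ (coarsen δb) s) '' {s | IsState M s}) ≤
        sSup ((fun s => contRegret τ δ' s) '' {s | IsState M s})) ∧
    sSup ((fun s => contRegret τ (coarsen δb) s) '' {s | IsState M s}) =
      sSup ((fun μ => binRegret τ δb μ) '' M) := by
  have hvalue := image_contRegret_coarsen τ hM δb
  refine ⟨fun δ hδ => ?_, by rw [hvalue]⟩
  calc sSup ((fun s => contRegret τ (coarsen δb) s) '' {s | IsState M s})
      = sSup ((fun μ => binRegret τ δb μ) '' M) := by rw [hvalue]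
    _ ≤ sSup ((fun μ => binRegret τ (restrictToBinary δ) μ) '' M) :=
      hminimax _ hδ.restrictToBinary
    _ ≤ sSup ((fun s => contRegret τ δ s) '' {s | IsState M s}) :=
      csSup_le_csSup (bddAbove_image_contRegret τ hM hδ.2.1) (hMne.image _)
        (image_binRegret_restrictToBinary_subset τ hM δ)

/-- if `δb` is minimax regret for the binary-outcome problem with mean
restriction `M` under fixed assignment, then its coarsening is minimax regret for the
`[0,1]`-outcome problem with the same mean restriction, and the two minimax values coincide. -/
theorem stmt16 {ι : Type*} [Fintype ι] [DecidableEq ι] {T : ℕ} (hT : 0 < T)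
    (τ : ι → Fin T) (M : Set (Fin T → ℝ)) (hMne : M.Nonempty)
    (hM : ∀ μ ∈ M, ∀ t, μ t ∈ Set.Icc (0:ℝ) 1)
    (δb : (ι → Bool) → Fin T → ℝ) (hδb : IsRuleB δb)
    (hminimax : ∀ δb' : (ι → Bool) → Fin T → ℝ, IsRuleB δb' →
      sSup ((fun μ => binRegret τ δb μ) '' M) ≤ sSup ((fun μ => binRegret τ δb' μ) '' M)) :
    (∀ δ' : (ι → ℝ) → Fin T → ℝ, IsRuleC δ' →
      sSup ((fun s => contRegret τ (coarsen δb) s) '' {s | IsState M s}) ≤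
        sSup ((fun s => contRegret τ δ' s) '' {s | IsState M s})) ∧
    sSup ((fun s => contRegret τ (coarsen δb) s) '' {s | IsState M s}) =
      sSup ((fun μ => binRegret τ δb μ) '' M) :=
  stmt16_general τ M hMne hM δb hminimax
end
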